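/- arXiv:2102.04682 — 3 statements merged into one kernel-verified Lean document; each statement's English description precedes it below -/
import Mathlib

section
/- For every k ∈ {0,…,N−1}, the matrix U_k^H H̄_k U_k equals the matrix G_k ∈ ℂ^{M×M} whose (ℓ,m) entry is Σ_{p=0}^{P−1} h(p) · γ̄(k,ℓ,p) · [m = (ℓ−p) mod M], where [·] is 1 if the condition holds and 0 otherwise. -/
open Finset Matrix

private lemma exp_sum_root (M : ℕ) (hM : 0 < M) (s : ℤ) :
    ∑ r ∈ range M, Complex.exp (2 * Real.pi * Complex.I * s / M) ^ r
      = if (M:ℤ) ∣ s then (M:ℂ) else 0 := by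
  have hMne : (M:ℂ) ≠ 0 := by exact_mod_cast hM.ne'
  set w : ℂ := Complex.exp (2 * Real.pi * Complex.I * s / M) with hw
  have hwM : w ^ M = 1 := by
    rw [hw, ← Complex.exp_nat_mul]
    have h1 : (M:ℂ) * (2 * Real.pi * Complex.I * s / M) = s * (2 * Real.pi * Complex.I) := by
      field_simp
    rw [h1, Complex.exp_int_mul_two_pi_mul_I]
  by_cases hdvd : (M:ℤ) ∣ s
  · obtain ⟨n, rfl⟩ := hdvd
    have hw1 : w = 1 := by
      rw [hw]
      have h2 : (2 * ↑Real.pi * Complex.I * (((M:ℤ)*n : ℤ):ℂ) / M)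
          = (n:ℤ) * (2*Real.pi*Complex.I) := by
        push_cast; field_simp
      rw [h2, Complex.exp_int_mul_two_pi_mul_I]
    simp [hw1]
  · have hw1 : w ≠ 1 := by
      intro hcon
      rw [hw, Complex.exp_eq_one_iff] at hcon
      obtain ⟨n, hn⟩ := hcon
      apply hdvd
      have h2 : (2:ℂ)*Real.pi*Complex.I ≠ 0 := by
        simp [Real.pi_ne_zero, Complex.I_ne_zero, Complex.ofReal_ne_zero]
      have h3 : (s:ℂ) = n * M := by
        field_simp at hn
        apply mul_left_cancel₀ h2
        rw [hn]; ring
      have h4 : s = n * M := by exact_mod_cast h3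
      exact ⟨n, by rw [h4, Int.mul_comm]⟩
    rw [geom_sum_eq hw1, hwM]
    simp [hdvd]

private lemma combo (c hp A1 B1 C A2 B2 : ℂ) :
    (starRingEnd ℂ) (c * Complex.exp A1 * Complex.exp B1) * (hp * Complex.exp C) *
      (c * Complex.exp A2 * Complex.exp B2)
    = (starRingEnd ℂ) c * c * hp *
        Complex.exp ((starRingEnd ℂ) A1 + (starRingEnd ℂ) B1 + C + A2 + B2) := by
  simp only [_root_.map_mul, ← Complex.exp_conj, Complex.exp_add]; ring

/-- For every `k ∈ {0,…,N−1}`, the matrix `U_kᴴ H̄_k U_k` equals the matrix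
`G_k ∈ ℂ^{M×M}` whose `(ℓ,m)` entry is `∑_{p=0}^{P−1} h p · γ̄(k,ℓ,p) · [m = (ℓ−p) mod M]`,
where `[·]` is `1` if the condition holds and `0` otherwise. -/
theorem stmt_2 (M N P : ℕ) (hM : 0 < M) (hN : 0 < N) (hP : 0 < P) (hPM : P ≤ M)
    (h : ℕ → ℂ) (Hf : ℕ → ℂ)
    (hHf : ∀ c : ℕ, Hf c = ∑ p ∈ range P,
      h p * Complex.exp (-2 * Real.pi * Complex.I * c * p / (M * N)))
    (k : ℕ) (hk : k < N)
    (FM : Matrix (Fin M) (Fin M) ℂ)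
    (hFM : ∀ r m : Fin M,
      FM r m = (1 / Real.sqrt M) * Complex.exp (-2 * Real.pi * Complex.I * (r : ℕ) * (m : ℕ) / M))
    (Λ : Matrix (Fin M) (Fin M) ℂ)
    (hΛ : Λ = Matrix.diagonal (fun m : Fin M =>
      Complex.exp (-2 * Real.pi * Complex.I * (m : ℕ) * k / (M * N))))
    (Hbar : Matrix (Fin M) (Fin M) ℂ)
    (hHbar : Hbar = Matrix.diagonal (fun r : Fin M => Hf (k + (r : ℕ) * N)))
    (U : Matrix (Fin M) (Fin M) ℂ) (hU : U = FM * Λ)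
    (γbar : Fin M → ℕ → ℂ)
    (hγbar : ∀ (ℓ : Fin M) (p : ℕ),
      γbar ℓ p = if p ≤ (ℓ : ℕ) then 1 else Complex.exp (-2 * Real.pi * Complex.I * k / N))
    (G : Matrix (Fin M) (Fin M) ℂ)
    (hG : ∀ ℓ m : Fin M, G ℓ m = ∑ p ∈ range P,
      h p * γbar ℓ p * (if ((m : ℕ) : ℤ) = (((ℓ : ℕ) : ℤ) - (p : ℤ)) % (M : ℤ) then 1 else 0)) :
    Uᴴ * Hbar * U = G := by
  have hMC : (M:ℂ) ≠ 0 := by exact_mod_cast hM.ne'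
  have hNC : (N:ℂ) ≠ 0 := by exact_mod_cast hN.ne'
  have hcc : (starRingEnd ℂ) (1 / (Real.sqrt M : ℂ)) * (1 / (Real.sqrt M : ℂ)) = (M:ℂ)⁻¹ := by
    rw [one_div, map_inv₀, Complex.conj_ofReal, ← mul_inv, ← Complex.ofReal_mul,
      Real.mul_self_sqrt (Nat.cast_nonneg M)]
    simp
  ext ℓ m
  set sI : ℕ → ℤ := fun p => ((ℓ:ℕ):ℤ) - ((m:ℕ):ℤ) - (p:ℤ) with hsIdef
  set w : ℕ → ℂ := fun p => Complex.exp (2 * Real.pi * Complex.I * ((sI p : ℤ):ℂ) / M) with hwdef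
  set c : ℕ → ℂ := fun p => (M:ℂ)⁻¹ * h p *
      Complex.exp (2 * Real.pi * Complex.I * (((k:ℤ) * sI p : ℤ):ℂ) / (M * N)) with hcdef
  have hsp : ∀ p : ℕ, sI p = ((ℓ:ℕ):ℤ) - ((m:ℕ):ℤ) - (p:ℤ) := fun p => rfl
  have hL : (Uᴴ * Hbar * U) ℓ m
      = ∑ r : Fin M, (starRingEnd ℂ) (U r ℓ) * Hf (k + (r:ℕ) * N) * U r m := by
    rw [hHbar, Matrix.mul_apply]
    refine Finset.sum_congr rfl fun r _ => ?_
    rw [Matrix.mul_diagonal, Matrix.conjTranspose_apply]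
    rfl
  have key : ∀ (r : Fin M) (p : ℕ),
      (starRingEnd ℂ) (U r ℓ) * (h p *
        Complex.exp (-2 * Real.pi * Complex.I * ((k + (r:ℕ) * N : ℕ):ℂ) * p / (M * N))) * U r m
      = c p * w p ^ (r:ℕ) := by
    intro r p
    rw [hU, hΛ, Matrix.mul_diagonal, Matrix.mul_diagonal, hFM r ℓ, hFM r m, combo, hcc]
    simp only [hcdef, hwdef]
    rw [← Complex.exp_nat_mul, mul_assoc ((M:ℂ)⁻¹ * h p), ← Complex.exp_add]
    have : (M:ℂ)⁻¹ * h p * Complex.exp ((starRingEnd ℂ) (-2 * Real.pi * Complex.I * ((r:ℕ):ℂ) * ((ℓ:ℕ):ℂ) / M) + (starRingEnd ℂ) (-2 * Real.pi * Complex.I * ((ℓ:ℕ):ℂ) * (k:ℂ) / ((M:ℂ) * N)) + (-2 * Real.pi * Complex.I * ((k + (r:ℕ) * N : ℕ):ℂ) * (p:ℂ) / ((M:ℂ) * N)) + (-2 * Real.pi * Complex.I * ((r:ℕ):ℂ) * ((m:ℕ):ℂ) / M) + (-2 * Real.pi * Complex.I * ((m:ℕ):ℂ) * (k:ℂ) /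 ((M:ℂ) * N)))
        = (M:ℂ)⁻¹ * h p * Complex.exp (2 * Real.pi * Complex.I * (((k:ℤ) * sI p : ℤ):ℂ) / ((M:ℂ) * N) + ((r:ℕ):ℂ) * (2 * Real.pi * Complex.I * ((sI p : ℤ):ℂ) / M)) := by
      congr 1
      congr 1
      simp only [map_div₀, _root_.map_mul, map_neg, map_ofNat, Complex.conj_ofReal,
        Complex.conj_I, map_natCast, hsp]
      push_cast
      rw [div_add_div _ _ hMC (mul_ne_zero hMC hNC),
        div_add_div _ _ (mul_ne_zero hMC (mul_ne_zero hMC hNC)) (mul_ne_zero hMC hNC),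
        div_add_div _ _ (mul_ne_zero (mul_ne_zero hMC (mul_ne_zero hMC hNC))
          (mul_ne_zero hMC hNC)) hMC,
        div_add_div _ _ (mul_ne_zero (mul_ne_zero (mul_ne_zero hMC (mul_ne_zero hMC hNC))
          (mul_ne_zero hMC hNC)) hMC) (mul_ne_zero hMC hNC)]
      rw [← mul_div_assoc]
      rw [div_add_div _ _ (mul_ne_zero hMC hNC) hMC]
      rw [div_eq_div_iff (by simp [hMC, hNC]) (by simp [hMC, hNC])]
      ring
    exact this
  calc (Uᴴ * Hbar * U) ℓ m
      = ∑ r : Fin M, ∑ p ∈ range P, c p * w p ^ (r:ℕ) := by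
        rw [hL]
        refine Finset.sum_congr rfl fun r _ => ?_
        rw [hHf, Finset.mul_sum, Finset.sum_mul]
        exact Finset.sum_congr rfl fun p _ => key r p
    _ = ∑ p ∈ range P, ∑ r ∈ range M, c p * w p ^ r := by
        rw [Finset.sum_comm]
        exact Finset.sum_congr rfl fun p _ =>
          Fin.sum_univ_eq_sum_range (fun r => c p * w p ^ r) M
    _ = ∑ p ∈ range P, c p * (if (M:ℤ) ∣ sI p then (M:ℂ) else 0) := by
        refine Finset.sum_congr rfl fun p _ => ?_
        rw [← Finset.mul_sum]
        congr 1
        simp only [hwdef]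
        rw [exp_sum_root M hM (sI p)]
    _ = ∑ p ∈ range P, h p * γbar ℓ p *
          (if ((m:ℕ):ℤ) = (((ℓ:ℕ):ℤ) - (p:ℤ)) % (M:ℤ) then 1 else 0) := by
        refine Finset.sum_congr rfl fun p hp => ?_
        have hpP : p < P := Finset.mem_range.mp hp
        have hplM : p < M := lt_of_lt_of_le hpP hPM
        have hℓ : ((ℓ:ℕ):ℤ) < M := by exact_mod_cast ℓ.isLt
        have hm : ((m:ℕ):ℤ) < M := by exact_mod_cast m.isLt
        have hMZ : (0:ℤ) < M := by exact_mod_cast hM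
        have hcond : ((M:ℤ) ∣ sI p) ↔ (((m:ℕ):ℤ) = (((ℓ:ℕ):ℤ) - (p:ℤ)) % (M:ℤ)) := by
          rw [hsp p]
          constructor
          · intro hd
            have hd' : (M:ℤ) ∣ (((ℓ:ℕ):ℤ) - p - ((m:ℕ):ℤ)) := by
              have he : (((ℓ:ℕ):ℤ) - p - ((m:ℕ):ℤ)) = ((ℓ:ℕ):ℤ) - ((m:ℕ):ℤ) - p := by ring
              rw [he]; exact hd
            have hmod : (((ℓ:ℕ):ℤ) - p) % M = ((m:ℕ):ℤ) % M := by
              rw [Int.emod_eq_emod_iff_emod_sub_eq_zero, ← Int.dvd_iff_emod_eq_zero]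
              exact hd'
            rw [hmod, Int.emod_eq_of_lt (by positivity) hm]
          · intro hme
            have h1 : (((ℓ:ℕ):ℤ) - p) % M = ((m:ℕ):ℤ) % M := by
              rw [hme, Int.emod_emod_of_dvd _ dvd_rfl]
            rw [Int.emod_eq_emod_iff_emod_sub_eq_zero, ← Int.dvd_iff_emod_eq_zero] at h1
            have he : (((ℓ:ℕ):ℤ) - p - ((m:ℕ):ℤ)) = ((ℓ:ℕ):ℤ) - ((m:ℕ):ℤ) - p := by ring
            rw [he] at h1
            exact h1
        by_cases hd : (M:ℤ) ∣ sI p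
        · rw [if_pos hd, if_pos (hcond.mp hd), hγbar]
          simp only [hcdef]
          obtain ⟨t, ht⟩ := hd
          rw [hsp p] at ht
          by_cases hpl : p ≤ (ℓ:ℕ)
          · have hs0 : sI p = 0 := by
              have hub : (M:ℤ) * t < M * 1 := by rw [← ht]; omega
              have hlb : (M:ℤ) * (-1) < M * t := by rw [← ht]; omega
              have t1 : t < 1 := lt_of_mul_lt_mul_left hub hMZ.le
              have t2 : -1 < t := lt_of_mul_lt_mul_left hlb hMZ.le
              have ht0 : t = 0 := by omega
              rw [hsp p, ht, ht0, mul_zero]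
            rw [if_pos hpl, hs0]
            norm_num
            field_simp
          · have hsM : sI p = -(M:ℤ) := by
              have hub : (M:ℤ) * t < M * 0 := by rw [← ht]; omega
              have hlb : (M:ℤ) * (-2) < M * t := by rw [← ht]; omega
              have t1 : t < 0 := lt_of_mul_lt_mul_left hub hMZ.le
              have t2 : -2 < t := lt_of_mul_lt_mul_left hlb hMZ.le
              have ht1 : t = -1 := by omega
              rw [hsp p, ht, ht1]; ring
            rw [if_neg hpl, hsM]
            have he : Complex.exp (2 * Real.pi * Complex.I * (((k:ℤ) * (-(M:ℤ)) : ℤ):ℂ) / ((M:ℂ) * N))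
                = Complex.exp (-2 * Real.pi * Complex.I * (k:ℂ) / N) := by
              congr 1
              push_cast
              field_simp
            rw [he]
            field_simp
        · rw [if_neg hd, if_neg fun hcon => hd (hcond.mpr hcon)]
          ring
    _ = G ℓ m := (hG ℓ m).symm
end

section
/- For every k ∈ {0,…,N−1}, every vector x ∈ ℂ^M, and every ℓ ∈ {0,…,M−1}, the ℓ-th entry of (U_k^H H̄_k U_k) x equals Σ_{p=0}^{P−1} h(p) · γ̄(k,ℓ,p) · x((ℓ−p) mod M). In other words, the OTFS delay-Doppler input–output relation for a stationary user, Y[ℓ,k] = Σ_{p=0}^{P−1} h(p) γ̄(k,ℓ,p) X[(ℓ−p) mod M, k] + ω[ℓ,k], is equivalent to the vector relation y_k = U_k^H H̄_k U_k x_k + ω_k applied column by column. -/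
/-
Write `ζ = exp (2πi / (MN))`, a primitive `MN`-th root of unity, so that
`U_k[j, m] = ζ ^ (-(N j + k) m) / √M` and `H(c) = ∑_p h(p) ζ ^ (-c p)`. The `(ℓ, m)` entry of
`U_kᴴ H̄_k U_k` is then `(1/M) ∑_p h(p) ∑_j ζ ^ ((N j + k)(ℓ - p - m))`, and the sum over `j`
is a geometric sum in the primitive `M`-th root `ζ ^ N`: it is `M` if `M ∣ ℓ - p - m` and `0`
otherwise. So for each tap `p` only `m ≡ ℓ - p (mod M)` survives, with phase
`ζ ^ (k (ℓ - p - m))`: this is `1` when `p ≤ ℓ`, and `ζ ^ (-k M) = exp (-2πi k / N)` when the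
index wraps around, which, as `p < M`, happens at most once.
-/

open Finset Matrix

/-- The residue of an integer `a` modulo `M > 0`, as an element of `Fin M`. -/
def residueIdx (M : ℕ) (hM : 0 < M) (a : ℤ) : Fin M :=
  ⟨(a % (M : ℤ)).toNat, by
    have hlt : a % (M : ℤ) < (M : ℤ) := Int.emod_lt_of_pos _ (by exact_mod_cast hM)
    have hnonneg : 0 ≤ a % (M : ℤ) := Int.emod_nonneg _ (by exact_mod_cast hM.ne')
    omega⟩

open Complex

theorem IsPrimitiveRoot.geom_sum_zpow_eq_ite {K : Type*} [Field K] {ξ : K} {M : ℕ}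
    (hξ : IsPrimitiveRoot ξ M) (d : ℤ) :
    ∑ j ∈ range M, (ξ ^ d) ^ j = if (M : ℤ) ∣ d then (M : K) else 0 := by
  split_ifs with hd
  · simp [(hξ.zpow_eq_one_iff_dvd d).2 hd]
  · have hne : ξ ^ d ≠ 1 := fun h => hd ((hξ.zpow_eq_one_iff_dvd d).1 h)
    rw [geom_sum_eq hne, ← zpow_natCast, ← _root_.zpow_mul, mul_comm, _root_.zpow_mul,
      zpow_natCast, hξ.pow_eq_one, _root_.one_zpow, sub_self, zero_div]

theorem IsPrimitiveRoot.conj_zpow {ζ : ℂ} {n : ℕ} (hζ : IsPrimitiveRoot ζ n) (hn : n ≠ 0)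
    (a : ℤ) : starRingEnd ℂ (ζ ^ a) = ζ ^ (-a) := by
  rw [map_zpow₀, ← Complex.inv_eq_conj (hζ.norm'_eq_one hn), _root_.zpow_neg, _root_.inv_zpow]

theorem Complex.exp_eq_zpow_of_mul_eq {n : ℕ} (hn : n ≠ 0) {z : ℂ} {a : ℤ}
    (h : z * n = 2 * Real.pi * I * a) : exp z = exp (2 * Real.pi * I / n) ^ a := by
  rw [← exp_int_mul]
  congr 1
  have : (n : ℂ) ≠ 0 := Nat.cast_ne_zero.2 hn
  field_simp
  linear_combination h

noncomputable def twistedDFT (ζ : ℂ) (M N : ℕ) (k : ℤ) : Matrix (Fin M) (Fin M) ℂ :=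
  Matrix.of fun j m => (Real.sqrt M : ℂ)⁻¹ * ζ ^ (-((N * j + k) * m : ℤ))

noncomputable def freqResponse (h : ℕ → ℂ) (P : ℕ) (ζ : ℂ) (c : ℤ) : ℂ :=
  ∑ p ∈ range P, h p * ζ ^ (-(c * p))

theorem twistedDFT_conjTranspose_mul_diagonal_mul_apply {ζ : ℂ} {M N : ℕ}
    (hMN : 0 < M * N) (hζ : IsPrimitiveRoot ζ (M * N)) (k : ℤ) (h : ℕ → ℂ) (P : ℕ)
    (ℓ m : Fin M) :
    ((twistedDFT ζ M N k)ᴴ * diagonal (fun j : Fin M => freqResponse h P ζ (k + j * N)) *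
        twistedDFT ζ M N k) ℓ m =
      ∑ p ∈ range P, h p *
        if (M : ℤ) ∣ ℓ - p - m then ζ ^ (k * (ℓ - p - m)) else 0 := by
  have hζ0 : ζ ≠ 0 := hζ.ne_zero hMN.ne'
  have hM0 : (M : ℂ) ≠ 0 := Nat.cast_ne_zero.2 (Nat.pos_of_mul_pos_right hMN).ne'
  have hsqrt : (Real.sqrt M : ℂ)⁻¹ * (Real.sqrt M : ℂ)⁻¹ = (M : ℂ)⁻¹ := by
    rw [← mul_inv, ← ofReal_mul, Real.mul_self_sqrt M.cast_nonneg, ofReal_natCast]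
  have hterm : ∀ (j : Fin M) (p : ℕ),
      starRingEnd ℂ (twistedDFT ζ M N k j ℓ) * (h p * ζ ^ (-((k + j * N) * p))) *
          twistedDFT ζ M N k j m =
        (M : ℂ)⁻¹ * (h p * ζ ^ (k * (ℓ - p - m))) *
          ((ζ ^ N) ^ ((ℓ : ℤ) - p - m)) ^ (j : ℕ) := by
    intro j p
    simp only [twistedDFT, of_apply, _root_.map_mul, map_inv₀, conj_ofReal,
      hζ.conj_zpow hMN.ne']
    have hphase : ζ ^ (-(-((N * j + k) * ℓ : ℤ))) * ζ ^ (-((k + j * N) * p)) *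
        ζ ^ (-((N * j + k) * m : ℤ)) =
          ζ ^ (k * (ℓ - p - m)) * ((ζ ^ N) ^ ((ℓ : ℤ) - p - m)) ^ (j : ℕ) := by
      rw [← zpow_natCast, ← zpow_natCast, ← _root_.zpow_mul, ← _root_.zpow_mul,
        ← zpow_add₀ hζ0, ← zpow_add₀ hζ0, ← zpow_add₀ hζ0]
      congr 1
      ring
    rw [← hsqrt]
    linear_combination (Real.sqrt M : ℂ)⁻¹ * (Real.sqrt M : ℂ)⁻¹ * h p * hphase
  simp only [mul_apply, diagonal_apply, conjTranspose_apply, RCLike.star_def, mul_ite,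
    mul_zero, sum_ite_eq', mem_univ, if_true, freqResponse, mul_sum, sum_mul, hterm]
  rw [sum_comm]
  refine sum_congr rfl fun p _ => ?_
  rw [← mul_sum, Fin.sum_univ_eq_sum_range (fun j => ((ζ ^ N) ^ ((ℓ : ℤ) - p - m)) ^ j),
    (hζ.pow hMN (mul_comm M N)).geom_sum_zpow_eq_ite]
  split_ifs
  · field_simp
  · simp

section residueIdx

variable {M : ℕ} (hM : 0 < M)

theorem coe_residueIdx (a : ℤ) : ((residueIdx M hM a : ℕ) : ℤ) = a % M :=
  Int.toNat_of_nonneg (Int.emod_nonneg _ (by exact_mod_cast hM.ne'))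

theorem dvd_sub_iff_eq_residueIdx (a : ℤ) (m : Fin M) :
    (M : ℤ) ∣ a - m ↔ m = residueIdx M hM a := by
  rw [← Int.modEq_iff_dvd, Fin.ext_iff, ← Int.natCast_inj, coe_residueIdx, Int.ModEq,
    Int.emod_eq_of_lt (Int.natCast_nonneg _) (by exact_mod_cast m.isLt), eq_comm]

theorem sum_ite_dvd_sub_eq {R : Type*} [AddCommMonoid R] (a : ℤ) (g : Fin M → R) :
    ∑ m : Fin M, (if (M : ℤ) ∣ a - m then g m else 0) = g (residueIdx M hM a) := by
  simp_rw [dvd_sub_iff_eq_residueIdx hM, sum_ite_eq', mem_univ, if_true]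

theorem sub_residueIdx_eq_ite {ℓ p : ℕ} (hℓ : ℓ < M) (hp : p ≤ M) :
    (ℓ - p : ℤ) - residueIdx M hM (ℓ - p) = if p ≤ ℓ then 0 else -(M : ℤ) := by
  rw [coe_residueIdx]
  split_ifs with hpℓ
  · rw [Int.emod_eq_of_lt (by omega) (by omega), sub_self]
  · rw [← Int.add_emod_right, Int.emod_eq_of_lt (by omega) (by omega)]
    ring

end residueIdx

section expRoot

variable {M N : ℕ} (hM : 0 < M) (hN : 0 < N)
include hM hN

theorem twistedDFT_exp_apply (k : ℕ) (j m : Fin M) :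
    twistedDFT (exp (2 * Real.pi * I / (M * N : ℕ))) M N k j m =
      1 / Real.sqrt M * exp (-2 * Real.pi * I * (j : ℕ) * (m : ℕ) / M) *
        exp (-2 * Real.pi * I * (m : ℕ) * k / (M * N)) := by
  have hM0 : (M : ℂ) ≠ 0 := Nat.cast_ne_zero.2 hM.ne'
  have hN0 : (N : ℂ) ≠ 0 := Nat.cast_ne_zero.2 hN.ne'
  rw [twistedDFT, of_apply, one_div, mul_assoc _ (exp _), ← exp_add]
  congr 1
  refine (exp_eq_zpow_of_mul_eq (Nat.mul_pos hM hN).ne' ?_).symm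
  push_cast
  field_simp
  ring

theorem freqResponse_exp (h : ℕ → ℂ) (P c : ℕ) :
    freqResponse h P (exp (2 * Real.pi * I / (M * N : ℕ))) c =
      ∑ p ∈ range P, h p * exp (-2 * Real.pi * I * c * p / (M * N)) := by
  have hM0 : (M : ℂ) ≠ 0 := Nat.cast_ne_zero.2 hM.ne'
  have hN0 : (N : ℂ) ≠ 0 := Nat.cast_ne_zero.2 hN.ne'
  refine sum_congr rfl fun p _ => congrArg (h p * ·) ?_
  refine (exp_eq_zpow_of_mul_eq (Nat.mul_pos hM hN).ne' ?_).symm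
  push_cast
  field_simp

theorem exp_zpow_mul_sub_residueIdx (k : ℕ) {ℓ p : ℕ} (hℓ : ℓ < M) (hp : p ≤ M) :
    exp (2 * Real.pi * I / (M * N : ℕ)) ^
        ((k : ℤ) * ((ℓ - p : ℤ) - residueIdx M hM (ℓ - p))) =
      if p ≤ ℓ then 1 else exp (-2 * Real.pi * I * k / N) := by
  have hM0 : (M : ℂ) ≠ 0 := Nat.cast_ne_zero.2 hM.ne'
  have hN0 : (N : ℂ) ≠ 0 := Nat.cast_ne_zero.2 hN.ne'
  rw [sub_residueIdx_eq_ite hM hℓ hp]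
  split_ifs
  · simp
  · refine (exp_eq_zpow_of_mul_eq (Nat.mul_pos hM hN).ne' ?_).symm
    push_cast
    field_simp

end expRoot

theorem stmt_3_general (M N P : ℕ) (hM : 0 < M) (hN : 0 < N) (hPM : P ≤ M)
    (h : ℕ → ℂ) (Hf : ℕ → ℂ)
    (hHf : ∀ c : ℕ, Hf c = ∑ p ∈ range P,
      h p * Complex.exp (-2 * Real.pi * Complex.I * c * p / (M * N)))
    (k : ℕ)
    (FM : Matrix (Fin M) (Fin M) ℂ)
    (hFM : ∀ r m : Fin M,
      FM r m = (1 / Real.sqrt M) * Complex.exp (-2 * Real.pi * Complex.I * (r : ℕ) * (m : ℕ) / M))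
    (Λ : Matrix (Fin M) (Fin M) ℂ)
    (hΛ : Λ = Matrix.diagonal (fun m : Fin M =>
      Complex.exp (-2 * Real.pi * Complex.I * (m : ℕ) * k / (M * N))))
    (Hbar : Matrix (Fin M) (Fin M) ℂ)
    (hHbar : Hbar = Matrix.diagonal (fun r : Fin M => Hf (k + (r : ℕ) * N)))
    (U : Matrix (Fin M) (Fin M) ℂ) (hU : U = FM * Λ)
    (γbar : Fin M → ℕ → ℂ)
    (hγbar : ∀ (ℓ : Fin M) (p : ℕ),
      γbar ℓ p = if p ≤ (ℓ : ℕ) then 1 else Complex.exp (-2 * Real.pi * Complex.I * k / N)) :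
    ∀ (x : Fin M → ℂ) (ℓ : Fin M),
      (Uᴴ * Hbar * U).mulVec x ℓ =
        ∑ p ∈ range P, h p * γbar ℓ p * x (residueIdx M hM (((ℓ : ℕ) : ℤ) - (p : ℤ))) := by
  intro x ℓ
  have hMN : 0 < M * N := Nat.mul_pos hM hN
  set ζ := exp (2 * Real.pi * I / (M * N : ℕ))
  have hζ : IsPrimitiveRoot ζ (M * N) := isPrimitiveRoot_exp _ hMN.ne'
  have hU' : U = twistedDFT ζ M N k := by
    ext j m
    rw [hU, hΛ, mul_diagonal, hFM, twistedDFT_exp_apply hM hN]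
  have hHbar' : Hbar = diagonal fun j : Fin M => freqResponse h P ζ (k + j * N) := by
    rw [hHbar]
    refine congrArg diagonal (funext fun j => ?_)
    rw [hHf, ← freqResponse_exp hM hN, Nat.cast_add, Nat.cast_mul (α := ℤ)]
  rw [hU', hHbar']
  simp only [mulVec, dotProduct, twistedDFT_conjTranspose_mul_diagonal_mul_apply hMN hζ, sum_mul]
  rw [sum_comm]
  refine sum_congr rfl fun p hp => ?_
  rw [hγbar, ← exp_zpow_mul_sub_residueIdx hM hN k ℓ.isLt (hPM.trans' (mem_range.1 hp).le)]
  refine Eq.trans (sum_congr rfl fun m _ => ?_)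
    (sum_ite_dvd_sub_eq hM _ fun m => h p * ζ ^ ((k : ℤ) * ((ℓ - p : ℤ) - m)) * x m)
  split_ifs <;> simp

/-- For every `k ∈ {0,…,N−1}`, every vector `x ∈ ℂ^M`, and every
`ℓ ∈ {0,…,M−1}`, the `ℓ`-th entry of `(U_kᴴ H̄_k U_k) x` equals
`∑_{p=0}^{P−1} h p · γ̄(k,ℓ,p) · x((ℓ−p) mod M)`. This expresses the equivalence of the
OTFS delay–Doppler input–output relation for a stationary user with the vector relation
`y_k = U_kᴴ H̄_k U_k x_k + ω_k` applied column by column. -/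
theorem stmt_3 (M N P : ℕ) (hM : 0 < M) (hN : 0 < N) (hP : 0 < P) (hPM : P ≤ M)
    (h : ℕ → ℂ) (Hf : ℕ → ℂ)
    (hHf : ∀ c : ℕ, Hf c = ∑ p ∈ range P,
      h p * Complex.exp (-2 * Real.pi * Complex.I * c * p / (M * N)))
    (k : ℕ) (hk : k < N)
    (FM : Matrix (Fin M) (Fin M) ℂ)
    (hFM : ∀ r m : Fin M,
      FM r m = (1 / Real.sqrt M) * Complex.exp (-2 * Real.pi * Complex.I * (r : ℕ) * (m : ℕ) / M))
    (Λ : Matrix (Fin M) (Fin M) ℂ)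
    (hΛ : Λ = Matrix.diagonal (fun m : Fin M =>
      Complex.exp (-2 * Real.pi * Complex.I * (m : ℕ) * k / (M * N))))
    (Hbar : Matrix (Fin M) (Fin M) ℂ)
    (hHbar : Hbar = Matrix.diagonal (fun r : Fin M => Hf (k + (r : ℕ) * N)))
    (U : Matrix (Fin M) (Fin M) ℂ) (hU : U = FM * Λ)
    (γbar : Fin M → ℕ → ℂ)
    (hγbar : ∀ (ℓ : Fin M) (p : ℕ),
      γbar ℓ p = if p ≤ (ℓ : ℕ) then 1 else Complex.exp (-2 * Real.pi * Complex.I * k / N)) :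
    ∀ (x : Fin M → ℂ) (ℓ : Fin M),
      (Uᴴ * Hbar * U).mulVec x ℓ =
        ∑ p ∈ range P, h p * γbar ℓ p * x (residueIdx M hM (((ℓ : ℕ) : ℤ) - (p : ℤ))) :=
  stmt_3_general M N P hM hN hPM h Hf hHf k FM hFM Λ hΛ Hbar hHbar U hU γbar hγbar
end

section
/- For every k ∈ {0,…,N−1} and every r ∈ {0,…,M−1}, the vector v_r ∈ ℂ^M with entries v_r(m) = (1/√M) e^{2πi m (rN + k)/(MN)} is an eigenvector of the twisted-circulant channel matrix G_k with eigenvalue H(k + rN), i.e., G_k v_r = H(k + rN) · v_r. Consequently U_k G_k U_k^H = H̄_k, so G_k is unitarily diagonalized by U_k with eigenvalues H(k), H(k+N), …, H(k+(M−1)N). -/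
/-!
Write `z_r = exp (2πi (rN + k)/(MN))`, so that `v_r = (z_r ^ m)_m / √M`. Row `ℓ` of `G_k` applies
tap `p` at column `(ℓ - p) mod M`, and when this index wraps around, the twist
`exp (-2πik/N) = z_r⁻ᴹ` exactly compensates the jump by `M`; hence
`(G_k v_r)(ℓ) = Σ_p h(p) z_r^(ℓ-p) = H(k + rN) v_r(ℓ)`. The `v_r` are orthonormal because
`z_s⁻¹ z_r = exp (2πi (r - s)/M)` is an `M`-th root of unity different from `1` when `r ≠ s`,
and `U_k` is the conjugate transpose of the matrix with columns `v_r`, so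
`U_k G_k U_kᴴ = U_k U_kᴴ H̄_k = H̄_k`.
-/

open Finset Matrix

section TwistedCirculant

variable {R : Type*} [CommRing R]

def twistedCirculant (M P : ℕ) (h : ℕ → R) (t : R) : Matrix (Fin M) (Fin M) R :=
  of fun ℓ m => ∑ p ∈ range P, h p * (if p ≤ (ℓ : ℕ) then 1 else t) *
    (if ((m : ℕ) : ℤ) = (((ℓ : ℕ) : ℤ) - (p : ℤ)) % (M : ℤ) then 1 else 0)

theorem twist_mul_pow_emod {M : ℕ} {z w t : R} (hzw : z * w = 1) (ht : t * z ^ M = 1)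
    {ℓ p m : ℕ} (hℓ : ℓ < M) (hp : p ≤ M) (hm : (m : ℤ) = ((ℓ : ℤ) - p) % M) :
    (if p ≤ ℓ then 1 else t) * z ^ m = z ^ ℓ * w ^ p := by
  split_ifs with hpℓ
  · rw [Int.emod_eq_of_lt (by omega) (by omega)] at hm
    obtain rfl : ℓ = m + p := by omega
    rw [one_mul, pow_add, mul_assoc, ← mul_pow, hzw, one_pow, mul_one]
  · rw [← Int.add_emod_right, Int.emod_eq_of_lt (by omega) (by omega)] at hm
    have hmp : m + p = ℓ + M := by omega
    calc t * z ^ m = t * z ^ m * (z * w) ^ p := by rw [hzw, one_pow, mul_one]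
      _ = t * z ^ (m + p) * w ^ p := by ring
      _ = (t * z ^ M) * z ^ ℓ * w ^ p := by rw [hmp]; ring
      _ = z ^ ℓ * w ^ p := by rw [ht, one_mul]

theorem twistedCirculant_mulVec_pow {M P : ℕ} (h : ℕ → R) {z w t : R} (hzw : z * w = 1)
    (ht : t * z ^ M = 1) (hP : P ≤ M) :
    twistedCirculant M P h t *ᵥ (fun m : Fin M => z ^ (m : ℕ)) =
      (∑ p ∈ range P, h p * w ^ p) • fun m : Fin M => z ^ (m : ℕ) := by
  ext ℓ
  simp only [mulVec, dotProduct, twistedCirculant, of_apply, sum_mul, Pi.smul_apply, smul_eq_mul]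
  rw [sum_comm]
  refine sum_congr rfl fun p hp => ?_
  have hpM : p ≤ M := (mem_range.mp hp).le.trans hP
  have hM : (0 : ℤ) < M := by exact_mod_cast ℓ.pos
  have hnonneg := Int.emod_nonneg ((ℓ : ℤ) - p) hM.ne'
  have hlt := Int.emod_lt_of_pos ((ℓ : ℤ) - p) hM
  set m₀ : Fin M := ⟨(((ℓ : ℤ) - p) % M).toNat, by omega⟩
  have hm₀ : ((m₀ : ℕ) : ℤ) = ((ℓ : ℤ) - p) % M := Int.toNat_of_nonneg hnonneg
  have hcol : ∀ m : Fin M, ((m : ℕ) : ℤ) = ((ℓ : ℤ) - p) % M ↔ m = m₀ := fun m => by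
    rw [← hm₀, Nat.cast_inj, Fin.val_inj]
  simp only [hcol, mul_boole, ite_mul, zero_mul, sum_ite_eq', mem_univ, if_true]
  rw [mul_assoc, twist_mul_pow_emod hzw ht ℓ.isLt hpM hm₀]
  ring

end TwistedCirculant

theorem Matrix.mul_eq_mul_diagonal_of_mulVec_col {m n R : Type*} [Fintype m] [Fintype n]
    [DecidableEq n] [CommSemiring R] {A : Matrix m m R} {V : Matrix m n R} {d : n → R}
    (h : ∀ j, A *ᵥ V.col j = d j • V.col j) : A * V = V * diagonal d := by
  ext i j
  rw [mul_diagonal, mul_comm]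
  exact congrFun (h j) i

theorem IsPrimitiveRoot.sum_zpow_pow {K : Type*} [Field K] {ω : K} {M : ℕ}
    (hω : IsPrimitiveRoot ω M) (j : ℤ) :
    ∑ m ∈ range M, (ω ^ j) ^ m = if (M : ℤ) ∣ j then (M : K) else 0 := by
  split_ifs with hdvd
  · simp [(hω.zpow_eq_one_iff_dvd j).mpr hdvd]
  · have hpow : (ω ^ j) ^ M = 1 := by rw [← zpow_natCast, ← _root_.zpow_mul, mul_comm,
      _root_.zpow_mul, zpow_natCast, hω.pow_eq_one, _root_.one_zpow]
    rw [geom_sum_eq (mt (hω.zpow_eq_one_iff_dvd j).mp hdvd), hpow, sub_self, zero_div]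

theorem IsPrimitiveRoot.sum_fin_zpow_sub_pow {K : Type*} [Field K] {ω : K} {M : ℕ}
    (hω : IsPrimitiveRoot ω M) (s r : Fin M) :
    ∑ m : Fin M, (ω ^ ((r : ℤ) - s)) ^ (m : ℕ) = if s = r then (M : K) else 0 := by
  rw [Fin.sum_univ_eq_sum_range (fun m => (ω ^ ((r : ℤ) - s)) ^ m), hω.sum_zpow_pow]
  congr 1
  refine propext ⟨fun hdvd => Fin.ext ?_, fun hsr => by simp [hsr]⟩
  have := Int.eq_zero_of_abs_lt_dvd hdvd (by rw [abs_sub_lt_iff]; omega)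
  omega

open Complex
open scoped Real

noncomputable def subcarrier (M N k r : ℕ) : ℂ := exp (2 * π * I * (r * N + k) / (M * N))

section Subcarrier

variable {M N : ℕ} (k : ℕ)

theorem exp_eq_subcarrier_pow (r m : ℕ) :
    exp (2 * π * I * m * (r * N + k) / (M * N)) = subcarrier M N k r ^ m := by
  rw [subcarrier, ← exp_nat_mul]
  ring_nf

theorem exp_neg_eq_inv_subcarrier_pow (r p : ℕ) :
    exp (-2 * π * I * ((k + r * N : ℕ) : ℂ) * p / (M * N)) =
      (subcarrier M N k r)⁻¹ ^ p := by
  rw [subcarrier, ← exp_neg, ← exp_nat_mul]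
  push_cast
  ring_nf

theorem conj_subcarrier (r : ℕ) :
    starRingEnd ℂ (subcarrier M N k r) = (subcarrier M N k r)⁻¹ := by
  rw [subcarrier, ← exp_conj, ← exp_neg]
  simp only [map_div₀, map_mul, map_add, map_natCast, map_ofNat, conj_ofReal, conj_I]
  ring_nf

theorem exp_twist_mul_subcarrier_pow (hM : M ≠ 0) (hN : N ≠ 0) (r : ℕ) :
    exp (-2 * π * I * k / N) * subcarrier M N k r ^ M = 1 := by
  rw [subcarrier, ← exp_nat_mul, ← exp_add, ← exp_nat_mul_two_pi_mul_I r]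
  congr 1
  field_simp
  ring

theorem exp_mul_exp_eq_inv_subcarrier_pow (hN : N ≠ 0) (r m : ℕ) :
    exp (-2 * π * I * r * m / M) * exp (-2 * π * I * m * k / (M * N)) =
      (subcarrier M N k r)⁻¹ ^ m := by
  rw [subcarrier, ← exp_neg, ← exp_nat_mul, ← exp_add]
  congr 1
  field_simp
  ring

theorem inv_subcarrier_mul_subcarrier (hN : N ≠ 0) (s r : ℕ) :
    (subcarrier M N k s)⁻¹ * subcarrier M N k r = exp (2 * π * I / M) ^ ((r : ℤ) - s) := by
  rw [subcarrier, subcarrier, ← exp_neg, ← exp_add, ← exp_int_mul]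
  congr 1
  push_cast
  field_simp
  ring

theorem sum_inv_subcarrier_pow_mul_subcarrier_pow (hM : M ≠ 0) (hN : N ≠ 0) (s r : Fin M) :
    ∑ m : Fin M, (subcarrier M N k s)⁻¹ ^ (m : ℕ) * subcarrier M N k r ^ (m : ℕ) =
      if s = r then (M : ℂ) else 0 := by
  simp only [← mul_pow, inv_subcarrier_mul_subcarrier k hN]
  exact (isPrimitiveRoot_exp M hM).sum_fin_zpow_sub_pow s r

noncomputable def subcarrierMatrix (M N k : ℕ) : Matrix (Fin M) (Fin M) ℂ :=
  of fun m r => (1 / Real.sqrt M : ℂ) * subcarrier M N k r ^ (m : ℕ)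

theorem subcarrierMatrix_col (r : Fin M) :
    (subcarrierMatrix M N k).col r =
      (1 / Real.sqrt M : ℂ) • fun m : Fin M => subcarrier M N k r ^ (m : ℕ) :=
  rfl

theorem conjTranspose_subcarrierMatrix_apply (r m : Fin M) :
    (subcarrierMatrix M N k)ᴴ r m =
      (1 / Real.sqrt M : ℂ) * (subcarrier M N k r)⁻¹ ^ (m : ℕ) := by
  simp [subcarrierMatrix, conj_subcarrier]

theorem conjTranspose_subcarrierMatrix_mul_self (hM : M ≠ 0) (hN : N ≠ 0) :
    (subcarrierMatrix M N k)ᴴ * subcarrierMatrix M N k = 1 := by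
  have hnorm : (1 / Real.sqrt M : ℂ) * (1 / Real.sqrt M) * M = 1 := by
    rw [div_mul_div_comm, one_mul, ← ofReal_mul, Real.mul_self_sqrt (Nat.cast_nonneg M)]
    push_cast
    exact div_mul_cancel₀ 1 (by exact_mod_cast hM)
  ext s r
  calc ((subcarrierMatrix M N k)ᴴ * subcarrierMatrix M N k) s r
      = (1 / Real.sqrt M : ℂ) * (1 / Real.sqrt M) *
          ∑ m : Fin M, (subcarrier M N k s)⁻¹ ^ (m : ℕ) * subcarrier M N k r ^ (m : ℕ) := by
        simp only [mul_apply, conjTranspose_subcarrierMatrix_apply, mul_sum]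
        simp only [subcarrierMatrix, of_apply]
        exact sum_congr rfl fun m _ => by ring
    _ = (1 : Matrix (Fin M) (Fin M) ℂ) s r := by
        rw [sum_inv_subcarrier_pow_mul_subcarrier_pow k hM hN, one_apply, mul_ite, hnorm, mul_zero]

theorem twistedCirculant_mulVec_subcarrierMatrix_col (hM : M ≠ 0) (hN : N ≠ 0) {P : ℕ}
    (hP : P ≤ M) (h : ℕ → ℂ) (r : Fin M) :
    twistedCirculant M P h (exp (-2 * π * I * k / N)) *ᵥ (subcarrierMatrix M N k).col r =
      (∑ p ∈ range P, h p * (subcarrier M N k r)⁻¹ ^ p) • (subcarrierMatrix M N k).col r := by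
  rw [subcarrierMatrix_col, mulVec_smul,
    twistedCirculant_mulVec_pow h (z := subcarrier M N k r) (mul_inv_cancel₀ (exp_ne_zero _))
      (exp_twist_mul_subcarrier_pow k hM hN r) hP, smul_comm]

end Subcarrier

theorem stmt_5_general (M N P : ℕ) (hM : 0 < M) (hN : 0 < N) (hPM : P ≤ M)
    (h : ℕ → ℂ) (Hf : ℕ → ℂ)
    (hHf : ∀ c : ℕ, Hf c = ∑ p ∈ range P,
      h p * Complex.exp (-2 * Real.pi * Complex.I * c * p / (M * N)))
    (k : ℕ)
    (FM : Matrix (Fin M) (Fin M) ℂ)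
    (hFM : ∀ r m : Fin M,
      FM r m = (1 / Real.sqrt M) * Complex.exp (-2 * Real.pi * Complex.I * (r : ℕ) * (m : ℕ) / M))
    (Λ : Matrix (Fin M) (Fin M) ℂ)
    (hΛ : Λ = Matrix.diagonal (fun m : Fin M =>
      Complex.exp (-2 * Real.pi * Complex.I * (m : ℕ) * k / (M * N))))
    (Hbar : Matrix (Fin M) (Fin M) ℂ)
    (hHbar : Hbar = Matrix.diagonal (fun r : Fin M => Hf (k + (r : ℕ) * N)))
    (U : Matrix (Fin M) (Fin M) ℂ) (hU : U = FM * Λ)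
    (γbar : Fin M → ℕ → ℂ)
    (hγbar : ∀ (ℓ : Fin M) (p : ℕ),
      γbar ℓ p = if p ≤ (ℓ : ℕ) then 1 else Complex.exp (-2 * Real.pi * Complex.I * k / N))
    (G : Matrix (Fin M) (Fin M) ℂ)
    (hG : ∀ ℓ m : Fin M, G ℓ m = ∑ p ∈ range P,
      h p * γbar ℓ p * (if ((m : ℕ) : ℤ) = (((ℓ : ℕ) : ℤ) - (p : ℤ)) % (M : ℤ) then 1 else 0))
    (v : Fin M → Fin M → ℂ)
    (hv : ∀ r m : Fin M,
      v r m = (1 / Real.sqrt M) *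
        Complex.exp (2 * Real.pi * Complex.I * (m : ℕ) * ((r : ℕ) * N + k) / (M * N))) :
    (∀ r : Fin M, G.mulVec (v r) = Hf (k + (r : ℕ) * N) • v r) ∧
    U * G * Uᴴ = Hbar := by
  have hvV : ∀ r, v r = (subcarrierMatrix M N k).col r := fun r => by
    ext m
    rw [hv, exp_eq_subcarrier_pow]
    rfl
  have hUV : U = (subcarrierMatrix M N k)ᴴ := by
    ext r m
    rw [hU, hΛ, mul_diagonal, hFM, mul_assoc, exp_mul_exp_eq_inv_subcarrier_pow k hN.ne',
      conjTranspose_subcarrierMatrix_apply]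
  have hG' : G = twistedCirculant M P h (exp (-2 * π * I * k / N)) := by
    ext ℓ m
    simp only [hG, hγbar, twistedCirculant, of_apply]
  have heigen : ∀ r : Fin M, G *ᵥ v r = Hf (k + (r : ℕ) * N) • v r := fun r => by
    rw [hvV, hG', twistedCirculant_mulVec_subcarrierMatrix_col k hM.ne' hN.ne' hPM, hHf]
    simp only [exp_neg_eq_inv_subcarrier_pow]
  refine ⟨heigen, ?_⟩
  have hGV : G * subcarrierMatrix M N k = subcarrierMatrix M N k * Hbar :=
    hHbar ▸ mul_eq_mul_diagonal_of_mulVec_col fun r => hvV r ▸ heigen r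
  rw [hUV, conjTranspose_conjTranspose, Matrix.mul_assoc, hGV, ← Matrix.mul_assoc,
    conjTranspose_subcarrierMatrix_mul_self k hM.ne' hN.ne', Matrix.one_mul]

/-- For every `k ∈ {0,…,N−1}` and every `r ∈ {0,…,M−1}`, the vector
`v_r ∈ ℂ^M` with entries `v_r(m) = (1/√M) · exp(2πi m (rN + k)/(MN))` is an eigenvector of
the twisted-circulant channel matrix `G_k` with eigenvalue `H(k + rN)`, i.e.
`G_k v_r = H(k + rN) • v_r`. Consequently `U_k G_k U_kᴴ = H̄_k`, so `G_k` is unitarily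
diagonalized by `U_k` with eigenvalues `H(k), H(k+N), …, H(k+(M−1)N)`. -/
theorem stmt_5 (M N P : ℕ) (hM : 0 < M) (hN : 0 < N) (hP : 0 < P) (hPM : P ≤ M)
    (h : ℕ → ℂ) (Hf : ℕ → ℂ)
    (hHf : ∀ c : ℕ, Hf c = ∑ p ∈ range P,
      h p * Complex.exp (-2 * Real.pi * Complex.I * c * p / (M * N)))
    (k : ℕ) (hk : k < N)
    (FM : Matrix (Fin M) (Fin M) ℂ)
    (hFM : ∀ r m : Fin M,
      FM r m = (1 / Real.sqrt M) * Complex.exp (-2 * Real.pi * Complex.I * (r : ℕ) * (m : ℕ) / M))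
    (Λ : Matrix (Fin M) (Fin M) ℂ)
    (hΛ : Λ = Matrix.diagonal (fun m : Fin M =>
      Complex.exp (-2 * Real.pi * Complex.I * (m : ℕ) * k / (M * N))))
    (Hbar : Matrix (Fin M) (Fin M) ℂ)
    (hHbar : Hbar = Matrix.diagonal (fun r : Fin M => Hf (k + (r : ℕ) * N)))
    (U : Matrix (Fin M) (Fin M) ℂ) (hU : U = FM * Λ)
    (γbar : Fin M → ℕ → ℂ)
    (hγbar : ∀ (ℓ : Fin M) (p : ℕ),
      γbar ℓ p = if p ≤ (ℓ : ℕ) then 1 else Complex.exp (-2 * Real.pi * Complex.I * k / N))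
    (G : Matrix (Fin M) (Fin M) ℂ)
    (hG : ∀ ℓ m : Fin M, G ℓ m = ∑ p ∈ range P,
      h p * γbar ℓ p * (if ((m : ℕ) : ℤ) = (((ℓ : ℕ) : ℤ) - (p : ℤ)) % (M : ℤ) then 1 else 0))
    (v : Fin M → Fin M → ℂ)
    (hv : ∀ r m : Fin M,
      v r m = (1 / Real.sqrt M) *
        Complex.exp (2 * Real.pi * Complex.I * (m : ℕ) * ((r : ℕ) * N + k) / (M * N))) :
    (∀ r : Fin M, G.mulVec (v r) = Hf (k + (r : ℕ) * N) • v r) ∧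
    U * G * Uᴴ = Hbar :=
  stmt_5_general M N P hM hN hPM h Hf hHf k FM hFM Λ hΛ Hbar hHbar U hU γbar hγbar G hG v hv
end
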